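/- Let a, b > 0 with 2a + b < 2, u(x) = c + ∫₀ˣ φ(t) dt with φ ∈ L²(-π, π), and let y be given by y(x) = (1/b)(sin|x|)^{a/b}(cot(|x|/2))^{1/b} ∫₀ˣ u(t)(sin|t|)^{-a/b}(sin t)^{-1}(tan(|t|/2))^{1/b} dt. Then lim_{x→0} y(x) = c·y₀(0) = c/(1−a), where y₀ is the solution corresponding to u ≡ 1. -/

import Mathlib

open MeasureTheory Set Filter Topology intervalIntegral
open scoped Real

/-!
With `F(s) = sin(s)^(-a/b) tan(s/2)^(1/b)` one has `F'/F = (1 - a cos s)/(b sin s)`, so `F` is an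
integrating factor of `b sin x y' + (1 - a cos x) y = u`, and for `0 < x < π`
`y(x) = (b F(x))⁻¹ ∫₀ˣ u F / sin = b⁻¹ F(x)⁻¹ ∫₀ˣ u(s) b/(1 - a cos s) dF(s)`.
Since `2a + b < 2` forces `a < 1`, `F(s) ≍ s^((1-a)/b)` vanishes at `0`, so `y(x)` is `b⁻¹` times
a `dF`-average over `(0, x)` of a function tending to `c b/(1 - a)`: here `u` is continuous at `0`
because `φ ∈ L²(-π, π) ⊆ L¹(-π, π)`. For `x < 0` the substitution `t ↦ -t` reduces to `x > 0`.
-/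

section WeightedAverage

variable {F F' : ℝ → ℝ} {h : ℝ → ℂ} {L : ℂ} {a b ε : ℝ}

theorem norm_integral_mul_deriv_sub_le (hab : a ≤ b) (hF : ContinuousOn F (Icc a b))
    (hF' : ∀ s ∈ Ioo a b, HasDerivAt F (F' s) s) (hF'_nonneg : ∀ s ∈ Ioo a b, 0 ≤ F' s)
    (hh : ContinuousOn h (Ioc a b)) (hε : ∀ s ∈ Ioc a b, ‖h s - L‖ ≤ ε) :
    ‖(∫ s in a..b, h s * F' s) - L * (F b - F a)‖ ≤ ε * (F b - F a) := by
  have hF'_on : IntegrableOn F' (Ioc a b) := integrableOn_deriv_of_nonneg hF hF' hF'_nonneg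
  have hF'_int : IntervalIntegrable F' volume a b :=
    (intervalIntegrable_iff_integrableOn_Ioc_of_le hab).2 hF'_on
  have hF'_intC : IntervalIntegrable (fun s => (F' s : ℂ)) volume a b :=
    (intervalIntegrable_iff_integrableOn_Ioc_of_le hab).2 hF'_on.ofReal
  have hFTC : ∫ s in a..b, F' s = F b - F a :=
    integral_eq_sub_of_hasDeriv_right_of_le hab hF (fun s hs => (hF' s hs).hasDerivWithinAt)
      hF'_int
  have hh_bdd : ∀ s ∈ Ioc a b, ‖h s‖ ≤ ‖L‖ + ε := fun s hs =>
    calc ‖h s‖ = ‖L + (h s - L)‖ := by rw [add_sub_cancel]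
      _ ≤ ‖L‖ + ε := (norm_add_le _ _).trans (by gcongr; exact hε s hs)
  have hhF'_int : IntervalIntegrable (fun s => h s * (F' s : ℂ)) volume a b := by
    rw [intervalIntegrable_iff_integrableOn_Ioc_of_le hab]
    refine hF'_on.ofReal.bdd_mul (c := ‖L‖ + ε) (hh.aestronglyMeasurable measurableSet_Ioc) ?_
    exact (ae_restrict_iff' measurableSet_Ioc).2 (Eventually.of_forall hh_bdd)
  have hsplit : (∫ s in a..b, h s * F' s) - L * (F b - F a) =
      ∫ s in a..b, (h s - L) * F' s := by
    simp_rw [sub_mul]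
    rw [intervalIntegral.integral_sub hhF'_int (hF'_intC.const_mul L),
      intervalIntegral.integral_const_mul,
      integral_ofReal, hFTC, Complex.ofReal_sub]
  rw [hsplit, ← hFTC, ← intervalIntegral.integral_const_mul]
  refine norm_integral_le_of_norm_le hab ?_ (hF'_int.const_mul ε)
  filter_upwards [Measure.ae_ne volume b] with s hsb hs
  have hF's : 0 ≤ F' s := hF'_nonneg s ⟨hs.1, lt_of_le_of_ne hs.2 hsb⟩
  rw [norm_mul, Complex.norm_real, Real.norm_of_nonneg hF's]
  exact mul_le_mul_of_nonneg_right (hε s hs) hF's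

theorem tendsto_inv_mul_integral_mul_deriv {R : ℝ} (hR : 0 < R) (hF0 : F 0 = 0)
    (hF : ContinuousOn F (Icc 0 R)) (hF' : ∀ s ∈ Ioo 0 R, HasDerivAt F (F' s) s)
    (hF'_pos : ∀ s ∈ Ioo 0 R, 0 < F' s) (hh : ContinuousOn h (Ioo 0 R))
    (hL : Tendsto h (𝓝[>] 0) (𝓝 L)) :
    Tendsto (fun r => (F r : ℂ)⁻¹ * ∫ s in 0..r, h s * F' s) (𝓝[>] 0) (𝓝 L) := by
  have hF_mono : StrictMonoOn F (Icc 0 R) :=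
    strictMonoOn_of_deriv_pos (convex_Icc 0 R) hF fun s hs => by
      rw [interior_Icc] at hs
      exact (hF' s hs).deriv ▸ hF'_pos s hs
  rw [Metric.tendsto_nhds]
  intro ε hε
  obtain ⟨δ, hδ, hδh⟩ := mem_nhdsGT_iff_exists_Ioo_subset.1
    (hL (Metric.closedBall_mem_nhds L (half_pos hε)))
  filter_upwards [Ioo_mem_nhdsGT (lt_min hR hδ)] with r hr
  have hrR : r < R := hr.2.trans_le (min_le_left _ _)
  have hFr : 0 < F r := hF0 ▸ hF_mono ⟨le_rfl, hR.le⟩ ⟨hr.1.le, hrR.le⟩ hr.1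
  have hbound := norm_integral_mul_deriv_sub_le (h := h) (L := L) (ε := ε / 2) hr.1.le
    (hF.mono (Icc_subset_Icc_right hrR.le))
    (fun s hs => hF' s ⟨hs.1, hs.2.trans hrR⟩) (fun s hs => (hF'_pos s ⟨hs.1, hs.2.trans hrR⟩).le)
    (hh.mono fun s hs => ⟨hs.1, hs.2.trans_lt hrR⟩)
    (fun s hs => mem_closedBall_iff_norm.1
      (hδh ⟨hs.1, hs.2.trans_lt (hr.2.trans_le (min_le_right _ _))⟩))
  rw [hF0, sub_zero, Complex.ofReal_zero, sub_zero] at hbound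
  have hFr' : (F r : ℂ) ≠ 0 := Complex.ofReal_ne_zero.2 hFr.ne'
  calc dist ((F r : ℂ)⁻¹ * ∫ s in 0..r, h s * F' s) L
      = (F r)⁻¹ * ‖(∫ s in 0..r, h s * F' s) - L * F r‖ := by
        rw [dist_eq_norm, ← Real.norm_of_nonneg (inv_nonneg.2 hFr.le), ← Complex.norm_real,
          ← norm_mul, Complex.ofReal_inv, mul_sub, mul_comm L, inv_mul_cancel_left₀ hFr']
    _ ≤ (F r)⁻¹ * (ε / 2 * F r) := by gcongr
    _ < ε := by field_simp; linarith

end WeightedAverage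

theorem tendsto_nhdsLT_zero_of_comp_neg {α : Type*} {g : ℝ → α} {l : Filter α}
    (hg : Tendsto (fun x => g (-x)) (𝓝[>] 0) l) : Tendsto g (𝓝[<] 0) l := by
  refine (hg.comp (by simpa using tendsto_neg_nhdsLT (a := (0 : ℝ)))).congr fun x => ?_
  exact congrArg g (neg_neg x)

-- Where `cos (x / 2) = 0` both sides are the junk value `0`.
theorem Real.tan_half_eq_sin_div_one_add_cos (x : ℝ) :
    Real.tan (x / 2) = Real.sin x / (1 + Real.cos x) := by
  have hsin : Real.sin x = 2 * Real.sin (x / 2) * Real.cos (x / 2) := by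
    rw [← Real.sin_two_mul, mul_div_cancel₀ x two_ne_zero]
  have hcos : 1 + Real.cos x = 2 * Real.cos (x / 2) ^ 2 := by
    rw [Real.cos_sq, mul_div_cancel₀ x two_ne_zero]; ring
  rw [Real.tan_eq_sin_div_cos, hsin, hcos]
  rcases eq_or_ne (Real.cos (x / 2)) 0 with h | h
  · simp [h]
  · field_simp

theorem Real.one_sub_mul_cos_pos {a : ℝ} (ha : |a| < 1) (s : ℝ) : 0 < 1 - a * Real.cos s := by
  have : a * Real.cos s ≤ |a| := by
    calc a * Real.cos s ≤ |a * Real.cos s| := le_abs_self _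
      _ = |a| * |Real.cos s| := abs_mul _ _
      _ ≤ |a| * 1 := by gcongr; exact Real.abs_cos_le_one s
      _ = |a| := mul_one _
  linarith

noncomputable def integratingFactor (a b s : ℝ) : ℝ :=
  Real.sin s ^ (-(a / b)) * Real.tan (s / 2) ^ (1 / b)

namespace integratingFactor

variable {a b s r : ℝ}

theorem zero (hb : b ≠ 0) : integratingFactor a b 0 = 0 := by
  simpa [integratingFactor] using Or.inr (Real.zero_rpow (inv_ne_zero hb))

theorem pos (hs : s ∈ Ioo 0 π) : 0 < integratingFactor a b s := by
  have hsin : 0 < Real.sin s := Real.sin_pos_of_pos_of_lt_pi hs.1 hs.2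
  have htan : 0 < Real.tan (s / 2) :=
    Real.tan_pos_of_pos_of_lt_pi_div_two (by linarith [hs.1]) (by linarith [hs.2])
  exact mul_pos (Real.rpow_pos_of_pos hsin _) (Real.rpow_pos_of_pos htan _)

theorem eq_rpow (hs : s ∈ Ioo 0 π) :
    integratingFactor a b s = (Real.sin s ^ (1 - a) / (1 + Real.cos s)) ^ (1 / b) := by
  have hsin : 0 < Real.sin s := Real.sin_pos_of_pos_of_lt_pi hs.1 hs.2
  have hcos : 0 < 1 + Real.cos s := by
    nlinarith [Real.sin_sq_add_cos_sq s, Real.cos_le_one s]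
  rw [integratingFactor, Real.tan_half_eq_sin_div_one_add_cos, Real.div_rpow hsin.le hcos.le,
    Real.div_rpow (Real.rpow_nonneg hsin.le _) hcos.le, ← Real.rpow_mul hsin.le, mul_div_assoc',
    ← Real.rpow_add hsin]
  ring_nf

theorem tendsto_nhdsGT_zero (ha : a < 1) (hb : 0 < b) :
    Tendsto (integratingFactor a b) (𝓝[>] 0) (𝓝 0) := by
  have hcont : ContinuousAt (fun s => (Real.sin s ^ (1 - a) / (1 + Real.cos s)) ^ (1 / b)) 0 :=
    ((Real.continuous_sin.continuousAt.rpow_const (Or.inr (by linarith))).div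
      (continuous_const.add Real.continuous_cos).continuousAt (by norm_num)).rpow_const
      (Or.inr (by positivity))
  have hlim := hcont.tendsto.mono_left (nhdsWithin_le_nhds (s := Ioi 0))
  rw [Real.sin_zero, Real.zero_rpow (by linarith), zero_div,
    Real.zero_rpow (one_div_ne_zero hb.ne')] at hlim
  refine hlim.congr' ?_
  filter_upwards [Ioo_mem_nhdsGT Real.pi_pos] with s hs using (eq_rpow hs).symm

theorem hasDerivAt (hs : s ∈ Ioo 0 π) :
    HasDerivAt (integratingFactor a b)
      (integratingFactor a b s * (1 - a * Real.cos s) / (b * Real.sin s)) s := by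
  have hsin : 0 < Real.sin s := Real.sin_pos_of_pos_of_lt_pi hs.1 hs.2
  have hcos2 : 0 < Real.cos (s / 2) :=
    Real.cos_pos_of_mem_Ioo ⟨by linarith [hs.1, Real.pi_pos], by linarith [hs.2]⟩
  have htan : 0 < Real.tan (s / 2) :=
    Real.tan_pos_of_pos_of_lt_pi_div_two (by linarith [hs.1]) (by linarith [hs.2])
  have hsin_pow := (Real.hasDerivAt_sin s).rpow_const (p := -(a / b)) (Or.inl hsin.ne')
  have htan_half : HasDerivAt (fun t => Real.tan (t / 2)) (1 / Real.cos (s / 2) ^ 2 * (1 / 2)) s :=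
    by exact (Real.hasDerivAt_tan hcos2.ne').comp s ((hasDerivAt_id s).div_const 2)
  have htan_pow := htan_half.rpow_const (p := 1 / b) (Or.inl htan.ne')
  refine (hsin_pow.mul htan_pow).congr_deriv ?_
  have hsin_half : Real.sin s = 2 * Real.sin (s / 2) * Real.cos (s / 2) := by
    rw [← Real.sin_two_mul, mul_div_cancel₀ s two_ne_zero]
  rw [Real.rpow_sub_one hsin.ne', Real.rpow_sub_one htan.ne', integratingFactor,
    Real.tan_eq_sin_div_cos, hsin_half]
  field_simp
  ring

theorem continuousOn (ha : a < 1) (hb : 0 < b) :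
    ContinuousOn (integratingFactor a b) (Ico 0 π) := by
  intro s hs
  rcases hs.1.eq_or_lt with rfl | hs0
  · have : ContinuousWithinAt (integratingFactor a b) (Ici 0) 0 := by
      rw [← continuousWithinAt_Ioi_iff_Ici, ContinuousWithinAt, zero hb.ne']
      exact tendsto_nhdsGT_zero ha hb
    exact this.mono fun x hx => hx.1
  · exact (hasDerivAt ⟨hs0, hs.2⟩).continuousAt.continuousWithinAt

-- Also true where `sin s = 0` (both sides are `0`), so integrands can be compared up to `s = 0`.
theorem div_sin_eq (hb : b ≠ 0) (hs : 1 - a * Real.cos s ≠ 0) :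
    integratingFactor a b s / Real.sin s =
      b / (1 - a * Real.cos s) *
        (integratingFactor a b s * (1 - a * Real.cos s) / (b * Real.sin s)) := by
  rcases eq_or_ne (Real.sin s) 0 with h | h
  · simp [h]
  · field_simp

theorem inv_mul_eq (hr : r ∈ Ioo 0 π) :
    (b * integratingFactor a b r)⁻¹ =
      1 / b * Real.sin r ^ (a / b) * Real.cot (r / 2) ^ (1 / b) := by
  have hsin : 0 < Real.sin r := Real.sin_pos_of_pos_of_lt_pi hr.1 hr.2
  have htan : 0 < Real.tan (r / 2) :=
    Real.tan_pos_of_pos_of_lt_pi_div_two (by linarith [hr.1]) (by linarith [hr.2])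
  have hcot : Real.cot (r / 2) = (Real.tan (r / 2))⁻¹ := by
    rw [Real.cot_eq_cos_div_sin, Real.tan_eq_sin_div_cos, inv_div]
  rw [integratingFactor, hcot, Real.inv_rpow htan.le, Real.rpow_neg hsin.le, mul_inv, mul_inv,
    inv_inv, one_div]
  ring

end integratingFactor

noncomputable def regularSolution (a b : ℝ) (v : ℝ → ℂ) (r : ℝ) : ℂ :=
  (((b * integratingFactor a b r)⁻¹ : ℝ) : ℂ) *
    ∫ s in 0..r, v s * ((integratingFactor a b s / Real.sin s : ℝ) : ℂ)

theorem tendsto_regularSolution {a b R : ℝ} {v : ℝ → ℂ} {c : ℂ} (ha : |a| < 1) (hb : 0 < b)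
    (hR : 0 < R) (hv : ContinuousOn v (Ioo 0 R)) (hvc : Tendsto v (𝓝[>] 0) (𝓝 c)) :
    Tendsto (regularSolution a b v) (𝓝[>] 0) (𝓝 (c / ((1 - a : ℝ) : ℂ))) := by
  have hcos := Real.one_sub_mul_cos_pos ha
  set F' := fun s => integratingFactor a b s * (1 - a * Real.cos s) / (b * Real.sin s)
  have hq : Continuous fun s => ((b / (1 - a * Real.cos s) : ℝ) : ℂ) := by
    fun_prop (disch := exact fun s => (hcos s).ne')
  set h := fun s => v s * ((b / (1 - a * Real.cos s) : ℝ) : ℂ)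
  have hR' : 0 < min R (π / 2) := lt_min hR (by positivity)
  have hR'π : min R (π / 2) < π := (min_le_right _ _).trans_lt (by linarith [Real.pi_pos])
  have hlim := tendsto_inv_mul_integral_mul_deriv (F := integratingFactor a b) (F' := F') (h := h)
    hR' (integratingFactor.zero hb.ne')
    ((integratingFactor.continuousOn (by linarith [(abs_lt.1 ha).2]) hb).mono
      (Icc_subset_Ico_right hR'π))
    (fun s hs => integratingFactor.hasDerivAt ⟨hs.1, hs.2.trans hR'π⟩)
    (fun s hs => by
      have hsin := Real.sin_pos_of_pos_of_lt_pi hs.1 (hs.2.trans hR'π)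
      have := integratingFactor.pos (a := a) (b := b) ⟨hs.1, hs.2.trans hR'π⟩
      have := hcos s
      positivity)
    ((hv.mono (Ioo_subset_Ioo_right (min_le_left _ _))).mul hq.continuousOn)
    (hvc.mul ((hq.tendsto 0).mono_left nhdsWithin_le_nhds))
  rw [Real.cos_zero, mul_one] at hlim
  have hlim' := hlim.const_mul ((b⁻¹ : ℝ) : ℂ)
  convert hlim' using 1
  · funext r
    have hint : ∫ s in 0..r, v s * ((integratingFactor a b s / Real.sin s : ℝ) : ℂ) =
        ∫ s in 0..r, h s * F' s :=
      integral_congr fun s _ => by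
        rw [integratingFactor.div_sin_eq hb.ne' (hcos s).ne', Complex.ofReal_mul, mul_assoc]
    simp only [regularSolution]
    rw [hint, mul_inv, Complex.ofReal_mul, Complex.ofReal_inv, Complex.ofReal_inv, mul_assoc]
  · have hb' : (b : ℂ) ≠ 0 := Complex.ofReal_ne_zero.2 hb.ne'
    push_cast
    congr 1
    field_simp

theorem MeasureTheory.MemLp.continuousOn_primitive {φ : ℝ → ℂ} {p : ENNReal} {A B a b x₀ : ℝ}
    (hφ : MemLp φ p (volume.restrict (Ioo A B))) (hp : 1 ≤ p) (hab : Icc a b ⊆ Ioo A B)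
    (hx₀ : x₀ ∈ Icc a b) : ContinuousOn (fun x => ∫ t in x₀..x, φ t) (Icc a b) := by
  have hle : a ≤ b := hx₀.1.trans hx₀.2
  have hφ_int : IntegrableOn φ (uIcc a b) := by
    rw [uIcc_of_le hle]
    exact IntegrableOn.mono_set (hφ.integrable hp) hab
  simpa only [uIcc_of_le hle] using
    continuousOn_primitive_interval' hφ_int.intervalIntegrable (by rwa [uIcc_of_le hle])

theorem integral_mul_abs_div_sin_of_nonneg {G : ℝ → ℝ} {v : ℝ → ℂ} {x : ℝ} (hx : 0 ≤ x) :
    ∫ t in 0..x, v t * ((G |t| / Real.sin t : ℝ) : ℂ) =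
      ∫ t in 0..x, v t * ((G t / Real.sin t : ℝ) : ℂ) :=
  integral_congr fun t ht => by
    rw [uIcc_of_le hx] at ht
    simp only [abs_of_nonneg ht.1]

theorem integral_neg_mul_abs_div_sin {G : ℝ → ℝ} {v : ℝ → ℂ} {x : ℝ} (hx : 0 ≤ x) :
    ∫ t in 0..-x, v t * ((G |t| / Real.sin t : ℝ) : ℂ) =
      ∫ s in 0..x, v (-s) * ((G s / Real.sin s : ℝ) : ℂ) := by
  rw [integral_symm, ← neg_zero, ← integral_comp_neg, neg_zero, ← intervalIntegral.integral_neg]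
  refine integral_congr fun s hs => ?_
  rw [uIcc_of_le hx] at hs
  simp only [abs_neg, abs_of_nonneg hs.1, Real.sin_neg, div_neg, Complex.ofReal_neg, mul_neg,
    neg_neg]

theorem eq_regularSolution {a b : ℝ} {u y : ℝ → ℂ}
    (hy : ∀ x ∈ Ioo (-π) π \ {(0:ℝ)},
      y x = (((1/b) * (Real.sin |x|) ^ (a/b) * (Real.cot (|x|/2)) ^ ((1:ℝ)/b) : ℝ) : ℂ) *
        ∫ t in (0:ℝ)..x,
          u t * (((Real.sin |t|) ^ (-(a/b)) * (Real.sin t)⁻¹ *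
            (Real.tan (|t|/2)) ^ ((1:ℝ)/b) : ℝ) : ℂ))
    {x : ℝ} (hx : x ∈ Ioo 0 π) :
    y x = regularSolution a b u x ∧ y (-x) = regularSolution a b (fun s => u (-s)) x := by
  have hkernel : ∀ t : ℝ,
      Real.sin |t| ^ (-(a / b)) * (Real.sin t)⁻¹ * Real.tan (|t| / 2) ^ (1 / b) =
        integratingFactor a b |t| / Real.sin t := fun t => by
    rw [integratingFactor]; ring
  simp only [hkernel] at hy
  constructor
  · rw [hy x ⟨⟨by linarith [hx.1, Real.pi_pos], hx.2⟩, hx.1.ne'⟩, abs_of_pos hx.1,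
      ← integratingFactor.inv_mul_eq hx, integral_mul_abs_div_sin_of_nonneg hx.1.le]
    rfl
  · have hx' : -x ∈ Ioo (-π) π \ {(0:ℝ)} :=
      ⟨⟨by linarith [hx.2], by linarith [hx.1, Real.pi_pos]⟩, by simpa using hx.1.ne'⟩
    rw [hy (-x) hx', abs_neg, abs_of_pos hx.1, ← integratingFactor.inv_mul_eq hx,
      integral_neg_mul_abs_div_sin hx.1.le]
    rfl

/-- For `a, b > 0` with `2a + b < 2`, `u(x) = c + ∫₀ˣ φ` with `φ ∈ L²`, and
`y(x) = (1/b)(sin|x|)^{a/b}(cot(|x|/2))^{1/b} ∫₀ˣ u(t)(sin|t|)^{-a/b}(sin t)⁻¹(tan(|t|/2))^{1/b} dt`,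
one has `lim_{x→0} y(x) = c·y₀(0) = c/(1−a)`. -/
theorem stmt17 (a b : ℝ) (ha : 0 < a) (hb : 0 < b) (hab : 2*a + b < 2)
    (c : ℂ) (φ : ℝ → ℂ) (hφ : MemLp φ 2 (volume.restrict (Ioo (-π) π)))
    (u : ℝ → ℂ) (hu : ∀ x, u x = c + ∫ t in (0:ℝ)..x, φ t)
    (y : ℝ → ℂ)
    (hy : ∀ x ∈ Ioo (-π) π \ {(0:ℝ)},
      y x = (((1/b) * (Real.sin |x|) ^ (a/b) * (Real.cot (|x|/2)) ^ ((1:ℝ)/b) : ℝ) : ℂ) *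
        ∫ t in (0:ℝ)..x,
          u t * (((Real.sin |t|) ^ (-(a/b)) * (Real.sin t)⁻¹ *
            (Real.tan (|t|/2)) ^ ((1:ℝ)/b) : ℝ) : ℂ)) :
    Tendsto y (nhdsWithin 0 (Ioo (-π) π \ {(0:ℝ)})) (nhds (c / ((1 - a : ℝ) : ℂ))) := by
  have ha1 : |a| < 1 := abs_lt.2 ⟨by linarith, by linarith⟩
  have hpi : 0 < π / 2 := by positivity
  have hu_cont : ContinuousOn u (Icc (-(π / 2)) (π / 2)) :=
    (continuousOn_const.add (hφ.continuousOn_primitive one_le_two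
      (Icc_subset_Ioo (by linarith) (by linarith)) ⟨by linarith, hpi.le⟩)).congr fun x _ => hu x
  have hu_lim : Tendsto u (𝓝 0) (𝓝 c) := by
    simpa [hu 0] using (hu_cont.continuousAt (Icc_mem_nhds (by linarith) hpi)).tendsto
  have hGT : Tendsto y (𝓝[>] 0) (𝓝 (c / ((1 - a : ℝ) : ℂ))) :=
    (tendsto_regularSolution ha1 hb hpi (hu_cont.mono fun s hs => ⟨by linarith [hs.1], hs.2.le⟩)
      (hu_lim.mono_left nhdsWithin_le_nhds)).congr' <| by
      filter_upwards [Ioo_mem_nhdsGT Real.pi_pos] with x hx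
      exact (eq_regularSolution hy hx).1.symm
  have hLT : Tendsto y (𝓝[<] 0) (𝓝 (c / ((1 - a : ℝ) : ℂ))) :=
    tendsto_nhdsLT_zero_of_comp_neg <| (tendsto_regularSolution ha1 hb hpi
      (hu_cont.comp continuous_neg.continuousOn fun s hs =>
        ⟨by linarith [hs.2], by linarith [hs.1]⟩)
      ((hu_lim.comp (continuous_neg.tendsto' 0 0 neg_zero)).mono_left nhdsWithin_le_nhds)).congr'
      <| by
        filter_upwards [Ioo_mem_nhdsGT Real.pi_pos] with x hx
        exact (eq_regularSolution hy hx).2.symm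
  refine (tendsto_sup.2 ⟨hLT, hGT⟩).mono_left ?_
  rw [nhdsLT_sup_nhdsGT]
  exact nhdsWithin_mono _ fun x hx => hx.2
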